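/- arXiv:1806.05703 — 3 statements merged into one kernel-verified Lean document; each statement's English description precedes it below -/
import Mathlib

section
/- Let L₁⁽¹⁾, L₁⁽²⁾, L₂⁽¹⁾, L₂⁽²⁾ be square real matrices of sizes n₁⁽¹⁾, n₁⁽²⁾, n₂⁽¹⁾, n₂⁽²⁾, let P₁ be n₁⁽²⁾×n₁⁽¹⁾ and P₂ be n₂⁽²⁾×n₂⁽¹⁾, and let α > 0. Then ‖(1/√α)(P₁⊗P₂)(L₁⁽¹⁾⊗I + I⊗L₂⁽¹⁾) − √α(L₁⁽²⁾⊗I + I⊗L₂⁽²⁾)(P₁⊗P₂)‖_F ≤ ‖(1/√α)P₁L₁⁽¹⁾ − √α L₁⁽²⁾P₁‖_F · ‖P₂‖_F + ‖P₁‖_F · ‖(1/√α)P₂L₂⁽¹⁾ − √α L₂⁽²⁾P₂‖_F. -/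
/-! By the mixed-product property the residual of the Kronecker-sum equation splits as
`R₁ ⊗ P₂ + P₁ ⊗ R₂`, where `Rᵢ` is the residual of the `i`-th factor equation; the bound then
follows from the triangle inequality and `‖A ⊗ B‖_F = ‖A‖_F ‖B‖_F`. -/

open Matrix Kronecker

noncomputable def frob {m n : Type*} [Fintype m] [Fintype n] (A : Matrix m n ℝ) : ℝ :=
  Real.sqrt ((Aᵀ * A).trace)

open scoped Matrix.Norms.Frobenius

namespace Matrix

theorem trace_transpose_mul_self_eq_sum_sq {m n : Type*} [Fintype m] [Fintype n]
    (A : Matrix m n ℝ) : (Aᵀ * A).trace = ∑ i, ∑ j, A i j ^ 2 := by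
  simp only [trace, diag, mul_apply, transpose_apply, ← sq]
  exact Finset.sum_comm

theorem trace_transpose_mul_self_nonneg {m n : Type*} [Fintype m] [Fintype n]
    (A : Matrix m n ℝ) : 0 ≤ (Aᵀ * A).trace := by
  rw [trace_transpose_mul_self_eq_sum_sq]
  positivity

theorem smul_kronecker_mul_kroneckerSum_sub_smul_kroneckerSum_mul
    {R m₁ m₂ n₁ n₂ : Type*} [CommRing R] [Fintype m₁] [Fintype m₂] [Fintype n₁] [Fintype n₂]
    [DecidableEq m₁] [DecidableEq m₂] [DecidableEq n₁] [DecidableEq n₂]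
    (c d : R) (L₁ : Matrix m₁ m₁ R) (M₁ : Matrix n₁ n₁ R) (L₂ : Matrix m₂ m₂ R)
    (M₂ : Matrix n₂ n₂ R) (P₁ : Matrix n₁ m₁ R) (P₂ : Matrix n₂ m₂ R) :
    c • ((P₁ ⊗ₖ P₂) * (L₁ ⊗ₖ (1 : Matrix m₂ m₂ R) + (1 : Matrix m₁ m₁ R) ⊗ₖ L₂))
        - d • ((M₁ ⊗ₖ (1 : Matrix n₂ n₂ R) + (1 : Matrix n₁ n₁ R) ⊗ₖ M₂) * (P₁ ⊗ₖ P₂)) =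
      (c • (P₁ * L₁) - d • (M₁ * P₁)) ⊗ₖ P₂ + P₁ ⊗ₖ (c • (P₂ * L₂) - d • (M₂ * P₂)) := by
  simp only [Matrix.mul_add, Matrix.add_mul, ← mul_kronecker_mul, Matrix.one_mul, Matrix.mul_one,
    sub_eq_add_neg, ← neg_smul, add_kronecker, kronecker_add, smul_kronecker, kronecker_smul,
    smul_add]
  module

end Matrix

section Frobenius

variable {l m n p : Type*} [Fintype l] [Fintype m] [Fintype n] [Fintype p]

theorem frob_eq_frobenius_norm (A : Matrix m n ℝ) : frob A = ‖A‖ := by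
  simp only [frob, frobenius_norm_def, trace_transpose_mul_self_eq_sum_sq, Real.sqrt_eq_rpow,
    Real.norm_eq_abs, Real.rpow_two, sq_abs]

theorem frob_add_le (A B : Matrix m n ℝ) : frob (A + B) ≤ frob A + frob B := by
  simpa only [frob_eq_frobenius_norm] using norm_add_le A B

theorem frob_kronecker (A : Matrix l m ℝ) (B : Matrix n p ℝ) :
    frob (A ⊗ₖ B) = frob A * frob B := by
  rw [frob, frob, frob, ← kroneckerMap_transpose, ← mul_kronecker_mul, trace_kronecker,
    Real.sqrt_mul (trace_transpose_mul_self_nonneg A)]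

end Frobenius

theorem stmt11_general {a₁ a₂ b₁ b₂ : ℕ}
    (L₁₁ : Matrix (Fin a₁) (Fin a₁) ℝ) (L₁₂ : Matrix (Fin a₂) (Fin a₂) ℝ)
    (L₂₁ : Matrix (Fin b₁) (Fin b₁) ℝ) (L₂₂ : Matrix (Fin b₂) (Fin b₂) ℝ)
    (P₁ : Matrix (Fin a₂) (Fin a₁) ℝ) (P₂ : Matrix (Fin b₂) (Fin b₁) ℝ)
    (α : ℝ) :
    frob ((1 / Real.sqrt α) •
          ((P₁ ⊗ₖ P₂) * (L₁₁ ⊗ₖ (1 : Matrix (Fin b₁) (Fin b₁) ℝ) + (1 : Matrix (Fin a₁) (Fin a₁) ℝ) ⊗ₖ L₂₁))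
        - Real.sqrt α •
          ((L₁₂ ⊗ₖ (1 : Matrix (Fin b₂) (Fin b₂) ℝ) + (1 : Matrix (Fin a₂) (Fin a₂) ℝ) ⊗ₖ L₂₂) * (P₁ ⊗ₖ P₂))) ≤
      frob ((1 / Real.sqrt α) • (P₁ * L₁₁) - Real.sqrt α • (L₁₂ * P₁)) * frob P₂ +
        frob P₁ * frob ((1 / Real.sqrt α) • (P₂ * L₂₁) - Real.sqrt α • (L₂₂ * P₂)) := by
  rw [smul_kronecker_mul_kroneckerSum_sub_smul_kroneckerSum_mul, ← frob_kronecker,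
    ← frob_kronecker]
  exact frob_add_le _ _

theorem stmt11 {a₁ a₂ b₁ b₂ : ℕ}
    (L₁₁ : Matrix (Fin a₁) (Fin a₁) ℝ) (L₁₂ : Matrix (Fin a₂) (Fin a₂) ℝ)
    (L₂₁ : Matrix (Fin b₁) (Fin b₁) ℝ) (L₂₂ : Matrix (Fin b₂) (Fin b₂) ℝ)
    (P₁ : Matrix (Fin a₂) (Fin a₁) ℝ) (P₂ : Matrix (Fin b₂) (Fin b₁) ℝ)
    (α : ℝ) (hα : 0 < α) :
    frob ((1 / Real.sqrt α) •
          ((P₁ ⊗ₖ P₂) * (L₁₁ ⊗ₖ (1 : Matrix (Fin b₁) (Fin b₁) ℝ) + (1 : Matrix (Fin a₁) (Fin a₁) ℝ) ⊗ₖ L₂₁))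
        - Real.sqrt α •
          ((L₁₂ ⊗ₖ (1 : Matrix (Fin b₂) (Fin b₂) ℝ) + (1 : Matrix (Fin a₂) (Fin a₂) ℝ) ⊗ₖ L₂₂) * (P₁ ⊗ₖ P₂))) ≤
      frob ((1 / Real.sqrt α) • (P₁ * L₁₁) - Real.sqrt α • (L₁₂ * P₁)) * frob P₂ +
        frob P₁ * frob ((1 / Real.sqrt α) • (P₂ * L₂₁) - Real.sqrt α • (L₂₂ * P₂)) :=
  stmt11_general L₁₁ L₁₂ L₂₁ L₂₂ P₁ P₂ α
end

section
/- There exists an orthogonal-column matrix P achieving zero diffusion cost (with α = 1) between the cycle graph Cₙ and the cycle graph C₂ₙ: i.e., there is a 2n×n real matrix P with PᵀP = I and P·L(Cₙ) = L(C₂ₙ)·P. -/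
/-!
Reduction modulo `n` is a two-fold covering map `C₂ₙ → Cₙ`: it maps the two neighbours of each
vertex bijectively onto the two neighbours of its image. For any covering `f : H → G` the
`0/1` matrix `Φ w v = [f w = v]` intertwines the Laplacians, `Φ L(G) = L(H) Φ`, since both sides
count the neighbours of `w` lying over `v` and degrees are preserved. The columns of `Φ` are the
indicator vectors of the fibres, which are disjoint of size `2`, so `P = Φ / √2` works.
-/

open Matrix

noncomputable def lap {V : Type*} [Fintype V] [DecidableEq V]
    (G : SimpleGraph V) [DecidableRel G.Adj] : Matrix V V ℝ :=
  G.adjMatrix ℝ - G.degMatrix ℝ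

open Finset

theorem Matrix.submatrix_one_mul {l m n R : Type*} [Fintype m] [DecidableEq m]
    [NonAssocSemiring R] (f : l → m) (M : Matrix m n R) :
    (1 : Matrix m m R).submatrix f id * M = M.submatrix f id := by
  simpa using (submatrix_mul 1 M f id id Function.bijective_id).symm

theorem Matrix.transpose_submatrix_one_mul_self {V W R : Type*} [Fintype W] [DecidableEq V]
    [NonAssocSemiring R] (f : W → V) :
    ((1 : Matrix V V R).submatrix f id)ᵀ * (1 : Matrix V V R).submatrix f id =
      diagonal fun v => (#{w | f w = v} : R) := by
  ext j k
  rcases eq_or_ne j k with rfl | hjk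
  · simp +contextual [mul_apply, one_apply, eq_comm]
  · simp +contextual [mul_apply, one_apply, hjk]

namespace SimpleGraph

def IsCovering {V W : Type*} (H : SimpleGraph W) (G : SimpleGraph V) (f : W → V) : Prop :=
  ∀ w, Set.BijOn f (H.neighborSet w) (G.neighborSet (f w))

namespace IsCovering

variable {V W R : Type*} [Fintype V] [Fintype W]
  {G : SimpleGraph V} {H : SimpleGraph W} [DecidableRel G.Adj] [DecidableRel H.Adj] {f : W → V}

theorem bijOn_neighborFinset (hf : H.IsCovering G f) (w : W) :
    Set.BijOn f (H.neighborFinset w) (G.neighborFinset (f w)) := by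
  simpa only [coe_neighborFinset] using hf w

theorem sum_neighborFinset [AddCommMonoid R] (hf : H.IsCovering G f) (g : V → R) (w : W) :
    ∑ u ∈ H.neighborFinset w, g (f u) = ∑ v ∈ G.neighborFinset (f w), g v :=
  sum_nbij f (hf.bijOn_neighborFinset w).mapsTo (hf.bijOn_neighborFinset w).injOn
    (hf.bijOn_neighborFinset w).surjOn fun _ _ => rfl

theorem degree_eq (hf : H.IsCovering G f) (w : W) : H.degree w = G.degree (f w) :=
  (hf.bijOn_neighborFinset w).finsetCard_eq

variable [DecidableEq V]

theorem submatrix_one_mul_adjMatrix [NonAssocSemiring R] (hf : H.IsCovering G f) :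
    (1 : Matrix V V R).submatrix f id * G.adjMatrix R =
      H.adjMatrix R * (1 : Matrix V V R).submatrix f id := by
  ext w v
  have hrow : (H.adjMatrix R * (1 : Matrix V V R).submatrix f id) w v =
      ∑ u ∈ H.neighborFinset w, (1 : Matrix V V R) (f u) v := by
    simp only [mul_apply, adjMatrix_apply, ite_mul, one_mul, zero_mul, neighborFinset_eq_filter,
      sum_filter]
    rfl
  rw [hrow, hf.sum_neighborFinset (fun x => (1 : Matrix V V R) x v), ← adjMatrix_mul_apply,
    Matrix.mul_one, submatrix_one_mul]
  rfl

variable [DecidableEq W]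

theorem submatrix_one_mul_degMatrix [NonAssocSemiring R] (hf : H.IsCovering G f) :
    (1 : Matrix V V R).submatrix f id * G.degMatrix R =
      H.degMatrix R * (1 : Matrix V V R).submatrix f id := by
  ext w v
  by_cases h : f w = v
  · subst h
    simp [degMatrix, one_apply, hf.degree_eq]
  · simp [degMatrix, one_apply, h]

theorem submatrix_one_mul_lap (hf : H.IsCovering G f) :
    (1 : Matrix V V ℝ).submatrix f id * lap G = lap H * (1 : Matrix V V ℝ).submatrix f id := by
  rw [lap, lap, Matrix.mul_sub, Matrix.sub_mul, hf.submatrix_one_mul_adjMatrix,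
    hf.submatrix_one_mul_degMatrix]

end IsCovering

end SimpleGraph

namespace Fin

theorem modNat_add {m n : ℕ} (i j : Fin (m * n)) : (i + j).modNat = i.modNat + j.modNat := by
  ext
  simp [Fin.val_add, Nat.mod_mod_of_dvd _ (dvd_mul_left n m), Nat.add_mod]

theorem modNat_sub {m n : ℕ} [NeZero m] [NeZero n] (i j : Fin (m * n)) :
    (i - j).modNat = i.modNat - j.modNat :=
  eq_sub_of_add_eq (by rw [← modNat_add, sub_add_cancel])

theorem modNat_one {m n : ℕ} [NeZero (m * n)] [NeZero n] : (1 : Fin (m * n)).modNat = 1 := by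
  ext
  simp [Nat.mod_mod_of_dvd _ (dvd_mul_left n m)]

theorem card_filter_modNat_eq {m n : ℕ} (j : Fin n) : #{i : Fin (m * n) | i.modNat = j} = m := by
  have hsnd (p : Fin m × Fin n) : (finProdFinEquiv p).modNat = p.2 :=
    congrArg Prod.snd (finProdFinEquiv.symm_apply_apply p)
  rw [card_filter, ← finProdFinEquiv.sum_comp, Fintype.sum_prod_type]
  simp [hsnd]

theorem sub_one_ne_add_one {n : ℕ} [NeZero n] (hn : 3 ≤ n) (x : Fin n) : x - 1 ≠ x + 1 := by
  intro h
  have h2 : (1 : Fin n) + 1 = 0 := by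
    rw [← sub_eq_zero.mpr h.symm]
    abel
  rw [Fin.ext_iff, Fin.val_add, Fin.val_one', Fin.val_zero, Nat.mod_eq_of_lt (show 1 < n by omega),
    Nat.mod_eq_of_lt (show 1 + 1 < n by omega)] at h2
  omega

end Fin

namespace SimpleGraph

theorem cycleGraph_neighborSet_of_two_le {n : ℕ} [NeZero n] (hn : 2 ≤ n) (v : Fin n) :
    (cycleGraph n).neighborSet v = {v - 1, v + 1} := by
  obtain ⟨k, rfl⟩ : ∃ k, n = k + 2 := ⟨n - 2, by omega⟩
  exact cycleGraph_neighborSet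

theorem isCovering_cycleGraph_modNat {m n : ℕ} [NeZero m] [NeZero n] (hn : 3 ≤ n) :
    (cycleGraph (m * n)).IsCovering (cycleGraph n) Fin.modNat := by
  intro i
  have hmn : 2 ≤ m * n := by nlinarith [NeZero.one_le (n := m)]
  rw [cycleGraph_neighborSet_of_two_le hmn, cycleGraph_neighborSet_of_two_le (by omega)]
  have himage : Fin.modNat '' {i - 1, i + 1} = {i.modNat - 1, i.modNat + 1} := by
    rw [Set.image_pair, Fin.modNat_sub, Fin.modNat_add, Fin.modNat_one]
  rw [← himage]
  refine Set.InjOn.bijOn_image ?_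
  rw [Set.injOn_pair, Fin.modNat_sub, Fin.modNat_add, Fin.modNat_one]
  exact fun h => absurd h (Fin.sub_one_ne_add_one hn _)

end SimpleGraph

theorem stmt14 (n : ℕ) (hn : 3 ≤ n) :
    ∃ P : Matrix (Fin (2 * n)) (Fin n) ℝ,
      Pᵀ * P = 1 ∧ P * lap (SimpleGraph.cycleGraph n) = lap (SimpleGraph.cycleGraph (2 * n)) * P := by
  have : NeZero n := ⟨by omega⟩
  set Φ := (1 : Matrix (Fin n) (Fin n) ℝ).submatrix (Fin.modNat (m := 2)) id
  refine ⟨(√2)⁻¹ • Φ, ?_, ?_⟩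
  · rw [transpose_smul, smul_mul, Matrix.mul_smul, smul_smul, transpose_submatrix_one_mul_self]
    simp only [Fin.card_filter_modNat_eq]
    rw [← mul_inv, Real.mul_self_sqrt zero_le_two]
    ext i j
    simp [diagonal_apply, one_apply]
  · rw [smul_mul, Matrix.mul_smul,
      (SimpleGraph.isCovering_cycleGraph_modNat hn).submatrix_one_mul_lap]
end

section
/- If every eigenvalue of the real symmetric matrix L₁ (n₁×n₁, counted with multiplicity) appears among the eigenvalues of the real symmetric matrix L₂ (n₂×n₂, n₁ ≤ n₂), then there exists a real n₂×n₁ matrix P with PᵀP = I such that P·L₁ = L₂·P. -/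
/-!
Diagonalise both matrices by unitaries, `A = U₁ D₁ U₁ᴴ` and `B = U₂ D₂ U₂ᴴ`. The embedding `f`
matching eigenvalues gives the partial permutation matrix `E` with `E i j = 1` iff `i = f j`;
it is an isometry (`Eᴴ E = 1`) and intertwines the diagonal forms (`E D₁ = D₂ E`). Conjugating
back, `P = U₂ E U₁ᴴ` is an isometry with `P A = B P`.
-/

open Matrix

namespace Matrix

variable {m n R : Type*} [Fintype n] [DecidableEq m] [DecidableEq n]

section PartialPermutation

variable [NonAssocSemiring R]

theorem conjTranspose_submatrix_one_mul_self [StarRing R] (f : m ↪ n) :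
    ((1 : Matrix n n R).submatrix id f)ᴴ * (1 : Matrix n n R).submatrix id f = 1 := by
  rw [conjTranspose_submatrix, conjTranspose_one,
    ← submatrix_mul _ _ _ _ _ Function.bijective_id, one_mul, submatrix_one_embedding]

theorem submatrix_one_mul_diagonal [Fintype m] (f : m ↪ n) {d₁ : m → R} {d₂ : n → R}
    (h : ∀ i, d₂ (f i) = d₁ i) :
    (1 : Matrix n n R).submatrix id f * diagonal d₁ =
      diagonal d₂ * (1 : Matrix n n R).submatrix id f := by
  ext i j
  rw [mul_diagonal, diagonal_mul, submatrix_apply, id, one_apply]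
  split_ifs with hij
  · simp [hij, h]
  · simp

end PartialPermutation

section UnitaryConj

variable [Fintype m] [CommRing R] [StarRing R]
  {P : Matrix n m R} {U : Matrix n n R} {V : Matrix m m R}

theorem conjTranspose_mul_self_unitary_mul_mul_star (hU : U ∈ unitaryGroup n R)
    (hV : V ∈ unitaryGroup m R) (hP : Pᴴ * P = 1) :
    (U * P * star V)ᴴ * (U * P * star V) = 1 := by
  calc (U * P * star V)ᴴ * (U * P * star V) = V * (Pᴴ * (star U * U) * P) * star V := by
        simp only [conjTranspose_mul, ← star_eq_conjTranspose, star_star, Matrix.mul_assoc]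
    _ = 1 := by
        rw [Unitary.star_mul_self_of_mem hU, Matrix.mul_one, hP, Matrix.mul_one,
          Unitary.mul_star_self_of_mem hV]

theorem mul_unitary_conj_eq_unitary_conj_mul (hU : U ∈ unitaryGroup n R)
    (hV : V ∈ unitaryGroup m R) {A : Matrix m m R} {B : Matrix n n R} (hP : P * A = B * P) :
    U * P * star V * (V * A * star V) = U * B * star U * (U * P * star V) := by
  calc U * P * star V * (V * A * star V) = U * (P * (star V * V) * A) * star V := by
        simp only [Matrix.mul_assoc]
    _ = U * (B * (star U * U) * P) * star V := by
        rw [Unitary.star_mul_self_of_mem hV, Unitary.star_mul_self_of_mem hU, Matrix.mul_one,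
          Matrix.mul_one, hP]
    _ = U * B * star U * (U * P * star V) := by simp only [Matrix.mul_assoc]

end UnitaryConj

theorem IsHermitian.exists_isometry_mul_eq_mul [Fintype m] {𝕜 : Type*} [RCLike 𝕜]
    {A : Matrix m m 𝕜} {B : Matrix n n 𝕜} (hA : A.IsHermitian) (hB : B.IsHermitian) (f : m ↪ n)
    (hf : ∀ i, hB.eigenvalues (f i) = hA.eigenvalues i) :
    ∃ P : Matrix n m 𝕜, Pᴴ * P = 1 ∧ P * A = B * P := by
  set E := (1 : Matrix n n 𝕜).submatrix id f
  have hE : E * diagonal (RCLike.ofReal ∘ hA.eigenvalues) =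
      diagonal (RCLike.ofReal ∘ hB.eigenvalues) * E :=
    submatrix_one_mul_diagonal f fun i => by simp [hf]
  rw [hA.spectral_theorem, hB.spectral_theorem]
  simp only [Unitary.conjStarAlgAut_apply]
  exact ⟨_, conjTranspose_mul_self_unitary_mul_mul_star hB.eigenvectorUnitary.2
      hA.eigenvectorUnitary.2 (conjTranspose_submatrix_one_mul_self f),
    mul_unitary_conj_eq_unitary_conj_mul hB.eigenvectorUnitary.2 hA.eigenvectorUnitary.2 hE⟩

end Matrix

theorem stmt19 {n₁ n₂ : ℕ}
    (L₁ : Matrix (Fin n₁) (Fin n₁) ℝ) (L₂ : Matrix (Fin n₂) (Fin n₂) ℝ)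
    (h₁ : L₁.IsHermitian) (h₂ : L₂.IsHermitian)
    (f : Fin n₁ ↪ Fin n₂)
    (hf : ∀ i, h₂.eigenvalues (f i) = h₁.eigenvalues i) :
    ∃ P : Matrix (Fin n₂) (Fin n₁) ℝ, Pᵀ * P = 1 ∧ P * L₁ = L₂ * P := by
  obtain ⟨P, hP, hPL⟩ := h₁.exists_isometry_mul_eq_mul h₂ f hf
  exact ⟨P, by rwa [← conjTranspose_eq_transpose_of_trivial], hPL⟩
end
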